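/- For every integer a with 2 ≤ a ≤ n, there does not exist an A^c_q-module of constant Jordan type [a]; i.e., no A-module M of dimension a restricts, for every nonzero λ ∈ k^c, to the single indecomposable k[u_λ]-module k[u_λ]/(u_λ^a). -/

import Mathlib

noncomputable section

/-- The indecomposable module `k[x]/(x^t)` over the truncated polynomial ring. -/
abbrev Mt (k : Type) [Field k] (t : ℕ) : Type :=
  Polynomial k ⧸ Ideal.span {(Polynomial.X : Polynomial k) ^ t}

/-- Multiplication by `x` on `k[x]/(x^t)`, as a `k`-linear map. -/
def xMul (k : Type) [Field k] (t : ℕ) : Mt k t →ₗ[k] Mt k t :=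
  LinearMap.mulLeft k (Ideal.Quotient.mk _ Polynomial.X)

/-- The model module `⊕_{t=1}^{n} (k[x]/(x^t))^{d_t}`; here `t : Fin n` indexes the
block of size `t+1`, occurring with multiplicity `d t`. -/
abbrev MJ (k : Type) [Field k] (n : ℕ) (d : Fin n → ℕ) : Type :=
  ∀ t : Fin n, Fin (d t) → Mt k ((t : ℕ) + 1)

/-- The action of `x` on the model module `MJ k n d`. -/
def MJmap (k : Type) [Field k] (n : ℕ) (d : Fin n → ℕ) : MJ k n d →ₗ[k] MJ k n d where
  toFun v t m := xMul k ((t : ℕ) + 1) (v t m)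
  map_add' a b := by funext t m; exact (xMul k ((t : ℕ) + 1)).map_add (a t m) (b t m)
  map_smul' r a := by funext t m; exact (xMul k ((t : ℕ) + 1)).map_smul r (a t m)

/-- A `k`-vector space `V` with endomorphism `f` has Jordan type `[1]^{d 0} ⋯ [n]^{d (n-1)}`
if `(V, f)` is isomorphic to the model module `MJ k n d` with its `x`-action. -/
def HasJordanType {k : Type} [Field k] {V : Type} [AddCommGroup V] [Module k V]
    (n : ℕ) (f : V →ₗ[k] V) (d : Fin n → ℕ) : Prop :=
  ∃ e : V ≃ₗ[k] MJ k n d, ∀ v, e (f v) = MJmap k n d (e v)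

/-- The relations defining the quantum complete intersection `A_q^c`. -/
inductive QCIRel (k : Type) [Field k] (n c : ℕ) (q : k) :
    FreeAlgebra k (Fin c) → FreeAlgebra k (Fin c) → Prop
  | pow (i : Fin c) : QCIRel k n c q (FreeAlgebra.ι k i ^ n) 0
  | comm (i j : Fin c) (h : i < j) :
      QCIRel k n c q (FreeAlgebra.ι k i * FreeAlgebra.ι k j)
        (q • (FreeAlgebra.ι k j * FreeAlgebra.ι k i))

/-- The quantum complete intersection `A_q^c = k⟨x_1,…,x_c⟩/(x_i^n, x_i x_j - q x_j x_i)`. -/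
abbrev QCI (k : Type) [Field k] (n c : ℕ) (q : k) : Type := RingQuot (QCIRel k n c q)

/-- The generator `x_i` of `A_q^c`. -/
def QCI.X (k : Type) [Field k] (n c : ℕ) (q : k) (i : Fin c) : QCI k n c q :=
  RingQuot.mkAlgHom k (QCIRel k n c q) (FreeAlgebra.ι k i)

/-- The linear form `u_λ = λ_1 x_1 + ⋯ + λ_c x_c` in `A_q^c`. -/
def QCI.u (k : Type) [Field k] (n c : ℕ) (q : k) (lam : Fin c → k) : QCI k n c q :=
  ∑ i, lam i • QCI.X k n c q i

/-- `n' = n` if `char k = 0`, and `n' = n / gcd(n, char k)` otherwise. -/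
def nprime (k : Type) [Field k] (n : ℕ) : ℕ :=
  if ringChar k = 0 then n else n / Nat.gcd n (ringChar k)

/-- The Jacobson radical of `A_q^c`, as the two-sided ideal generated by `x_1, …, x_c`,
viewed as a `k`-subspace. -/
def QCI.rad (k : Type) [Field k] (n c : ℕ) (q : k) : Submodule k (QCI k n c q) :=
  Submodule.span k {a | ∃ (i : Fin c) (b b' : QCI k n c q), a = b * QCI.X k n c q i * b'}


/-!
Let `f` and `g` be the actions of `x₁` and `x₂`. Both are single nilpotent Jordan blocks of size
`a`, and `g f = q⁻¹ f g`, so `g` preserves the filtration `F j = range (f ^ j)`. For a cyclic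
vector `v` of `f` we have `V = k v + F 1`; since `g` is nilpotent this forces `g v ∈ F 1`,
say `g v ≡ β • f v` modulo `F 2`. If `β = 0`, then `g` shifts the filtration by two and
`g ^ (a - 1) = 0`. Otherwise `u = f - β⁻¹ • g` shifts it by one and sends `v` into `F 2`, so `u ^ (a - 1) = 0`, and
the nonzero linear form `u` is not a single block of size `a`.
-/

namespace Module.End

variable {k V : Type*} [Field k] [AddCommGroup V] [Module k V]

/-- `(V, f)` is `k[x]/(x^a)` with `x` acting by multiplication and `v` corresponding to `1`. -/
structure IsJordanBlock (f : Module.End k V) (a : ℕ) (v : V) : Prop where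
  pow_eq_zero : f ^ a = 0
  pow_pred_apply_ne_zero : (f ^ (a - 1)) v ≠ 0
  span_pow_apply_eq_top : Submodule.span k (Set.range fun i : ℕ => (f ^ i) v) = ⊤

def RaisesRangePow (f φ : Module.End k V) (m : ℕ) : Prop :=
  ∀ j x, φ ((f ^ j) x) ∈ LinearMap.range (f ^ (j + m))

variable {f g φ ψ : Module.End k V} {a m : ℕ} {v : V}

lemma pow_apply_mem_range_pow {i j : ℕ} (hij : i ≤ j) (x : V) :
    (f ^ j) x ∈ LinearMap.range (f ^ i) :=
  ⟨(f ^ (j - i)) x, by rw [← Module.End.mul_apply, ← pow_add, Nat.add_sub_cancel' hij]⟩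

lemma raisesRangePow_self : RaisesRangePow f f 1 := fun j x =>
  ⟨x, by rw [pow_succ', Module.End.mul_apply]⟩

lemma RaisesRangePow.add (hφ : RaisesRangePow f φ m) (hψ : RaisesRangePow f ψ m) :
    RaisesRangePow f (φ + ψ) m := fun j x => add_mem (hφ j x) (hψ j x)

lemma RaisesRangePow.smul (hφ : RaisesRangePow f φ m) (t : k) :
    RaisesRangePow f (t • φ) m := fun j x => Submodule.smul_mem _ t (hφ j x)

lemma RaisesRangePow.pow (hφ : RaisesRangePow f φ m) (r : ℕ) :
    RaisesRangePow f (φ ^ r) (r * m) := by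
  intro j x
  induction r with
  | zero => simp
  | succ r ih =>
    obtain ⟨y, hy⟩ := ih
    rw [pow_succ', Module.End.mul_apply, ← hy, add_one_mul, ← add_assoc]
    exact hφ _ y

lemma RaisesRangePow.apply_eq_zero (hφ : RaisesRangePow f φ m) (hf : f ^ a = 0) {j : ℕ}
    (ha : a ≤ j + m) (x : V) : φ ((f ^ j) x) = 0 := by
  obtain ⟨y, hy⟩ := hφ j x
  rw [← hy, ← Nat.add_sub_cancel' ha, pow_add, hf, zero_mul, LinearMap.zero_apply]

lemma RaisesRangePow.eq_zero (hφ : RaisesRangePow f φ m) (hf : f ^ a = 0) (ha : a ≤ m) :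
    φ = 0 := by
  ext x
  simpa using hφ.apply_eq_zero hf (j := 0) (by omega) x

lemma pow_apply_sub_pow_smul_mem {p : Submodule k V} (hp : ∀ x ∈ p, φ x ∈ p) {x : V} {c : k}
    (hx : φ x - c • x ∈ p) (m : ℕ) : (φ ^ m) x - c ^ m • x ∈ p := by
  induction m with
  | zero => simp
  | succ m ih =>
    have : (φ ^ (m + 1)) x - c ^ (m + 1) • x =
        φ ((φ ^ m) x - c ^ m • x) + c ^ m • (φ x - c • x) := by
      rw [pow_succ', Module.End.mul_apply, map_sub, map_smul, smul_sub, smul_smul, ← pow_succ]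
      abel
    rw [this]
    exact add_mem (hp _ ih) (p.smul_mem _ hx)

variable {r : k}

lemma apply_pow_apply_eq_pow_smul (hgf : ∀ x, g (f x) = r • f (g x)) (j : ℕ) (x : V) :
    g ((f ^ j) x) = r ^ j • (f ^ j) (g x) := by
  induction j generalizing x with
  | zero => simp
  | succ j ih =>
    rw [pow_succ, Module.End.mul_apply, ih, hgf, map_smul, smul_smul, ← pow_succ,
      Module.End.mul_apply]

namespace IsJordanBlock

lemma of_conj {W : Type*} [AddCommGroup W] [Module k W] {h : Module.End k W} {w : W}
    (hh : IsJordanBlock h a w) (e : V ≃ₗ[k] W) (he : ∀ x, e (f x) = h (e x)) :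
    IsJordanBlock f a (e.symm w) := by
  have hpow (m : ℕ) (x : V) : e ((f ^ m) x) = (h ^ m) (e x) := by
    induction m generalizing x with
    | zero => rfl
    | succ m ih => rw [pow_succ, Module.End.mul_apply, ih, he, pow_succ, Module.End.mul_apply]
  refine ⟨?_, ?_, ?_⟩
  · ext x
    apply e.injective
    rw [hpow, hh.pow_eq_zero, LinearMap.zero_apply, LinearMap.zero_apply, map_zero]
  · intro h0
    apply hh.pow_pred_apply_ne_zero
    rw [← e.apply_symm_apply w, ← hpow, h0, map_zero]
  · have hspan := congrArg (Submodule.map (e.symm : W →ₗ[k] V)) hh.span_pow_apply_eq_top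
    rw [Submodule.map_span, Submodule.map_top, LinearEquiv.range, ← Set.range_comp] at hspan
    convert hspan using 3
    funext i
    apply e.injective
    simp [hpow]

lemma notMem_range (hf : IsJordanBlock f a v) (ha : 1 ≤ a) : v ∉ LinearMap.range f := by
  rintro ⟨y, rfl⟩
  apply hf.pow_pred_apply_ne_zero
  rw [← Module.End.mul_apply, ← pow_succ, Nat.sub_add_cancel ha, hf.pow_eq_zero,
    LinearMap.zero_apply]

lemma exists_sub_smul_mem_range (hf : IsJordanBlock f a v) (x : V) :
    ∃ c : k, x - c • v ∈ LinearMap.range f := by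
  have hle : Submodule.span k (Set.range fun i : ℕ => (f ^ i) v) ≤
      (k ∙ v) ⊔ LinearMap.range f := by
    rw [Submodule.span_le]
    rintro _ ⟨_ | i, rfl⟩
    · exact Submodule.mem_sup_left (Submodule.mem_span_singleton_self v)
    · exact Submodule.mem_sup_right ⟨(f ^ i) v, by simp only [pow_succ', Module.End.mul_apply]⟩
  obtain ⟨_, hy, z, hz, rfl⟩ :=
    Submodule.mem_sup.mp (hle (hf.span_pow_apply_eq_top ▸ Submodule.mem_top : x ∈ _))
  obtain ⟨c, rfl⟩ := Submodule.mem_span_singleton.mp hy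
  exact ⟨c, by simpa using hz⟩

lemma raisesRangePow_of_apply_mem (hf : IsJordanBlock f a v)
    (hgf : ∀ x, g (f x) = r • f (g x)) (hgv : g v ∈ LinearMap.range (f ^ m)) :
    RaisesRangePow f g m := by
  have hg : ∀ x, g x ∈ LinearMap.range (f ^ m) := by
    have hle : Submodule.span k (Set.range fun i : ℕ => (f ^ i) v) ≤
        (LinearMap.range (f ^ m)).comap g := by
      rw [Submodule.span_le]
      rintro _ ⟨i, rfl⟩
      obtain ⟨y, hy⟩ := hgv
      rw [SetLike.mem_coe, Submodule.mem_comap, apply_pow_apply_eq_pow_smul hgf, ← hy,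
        ← Module.End.mul_apply, ← pow_add]
      exact Submodule.smul_mem _ _ (pow_apply_mem_range_pow (Nat.le_add_left m i) _)
    exact fun x => hle (hf.span_pow_apply_eq_top ▸ Submodule.mem_top)
  intro j x
  obtain ⟨y, hy⟩ := hg x
  rw [apply_pow_apply_eq_pow_smul hgf, ← hy, ← Module.End.mul_apply, ← pow_add]
  exact Submodule.smul_mem _ _ (LinearMap.mem_range_self _ _)

lemma apply_mem_range (hf : IsJordanBlock f a v) (hgf : ∀ x, g (f x) = r • f (g x))
    (hg : g ^ a = 0) (ha : 1 ≤ a) : g v ∈ LinearMap.range f := by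
  obtain ⟨c, hc⟩ := hf.exists_sub_smul_mem_range (g v)
  have hmaps : ∀ x ∈ LinearMap.range f, g x ∈ LinearMap.range f := by
    rintro _ ⟨y, rfl⟩
    simpa using raisesRangePow_of_apply_mem hf hgf (m := 0) (by simp) 1 y
  have hca : -(c ^ a • v) ∈ LinearMap.range f := by
    simpa [hg] using pow_apply_sub_pow_smul_mem hmaps hc a
  obtain rfl : c = 0 := by
    by_contra hc0
    refine hf.notMem_range ha ?_
    simpa [hc0] using (LinearMap.range f).smul_mem (-(c ^ a)⁻¹) hca
  simpa using hc

theorem exists_add_smul_pow_pred_eq_zero (hf : IsJordanBlock f a v) {w : V}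
    (hg : IsJordanBlock g a w) (hgf : ∀ x, g (f x) = r • f (g x)) (ha : 2 ≤ a) :
    ∃ t : k, (f + t • g) ^ (a - 1) = 0 := by
  obtain ⟨y, hy⟩ := hf.apply_mem_range hgf hg.pow_eq_zero (by omega)
  obtain ⟨β, z, hz⟩ := hf.exists_sub_smul_mem_range y
  have hgv : g v - β • f v = (f ^ 2) z := by
    rw [← hy, pow_two, Module.End.mul_apply, hz, map_sub, map_smul]
  have hβ : β ≠ 0 := by
    rintro rfl
    have hg2 : RaisesRangePow f g 2 :=
      hf.raisesRangePow_of_apply_mem hgf ⟨z, by simpa using hgv.symm⟩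
    apply hg.pow_pred_apply_ne_zero
    rw [(hg2.pow (a - 1)).eq_zero hf.pow_eq_zero (by omega), LinearMap.zero_apply]
  set u := f + (-β⁻¹) • g
  have hu : RaisesRangePow f u 1 := raisesRangePow_self.add
    ((hf.raisesRangePow_of_apply_mem hgf (m := 1) (by simpa using ⟨y, hy⟩)).smul _)
  have huv : u v = (f ^ 2) ((-β⁻¹) • z) := by
    rw [map_smul, ← hgv, smul_sub, smul_smul, neg_mul, inv_mul_cancel₀ hβ]
    simp [u, add_comm]
  refine ⟨-β⁻¹, ?_⟩
  ext x
  obtain ⟨c, x', hx'⟩ := hf.exists_sub_smul_mem_range x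
  rw [← sub_add_cancel x (c • v), ← hx', map_add, map_smul, LinearMap.zero_apply]
  have hv : (u ^ (a - 1)) v = 0 := by
    rw [show a - 1 = (a - 2) + 1 by omega, pow_succ, Module.End.mul_apply, huv]
    exact (hu.pow _).apply_eq_zero hf.pow_eq_zero (by omega) _
  have hx : (u ^ (a - 1)) (f x') = 0 := by
    simpa using (hu.pow (a - 1)).apply_eq_zero hf.pow_eq_zero (j := 1) (by omega) x'
  rw [hv, hx, smul_zero, add_zero]

end IsJordanBlock

end Module.End

open Polynomial in
lemma xMul_pow_apply (k : Type) [Field k] (b m : ℕ) (y : Mt k b) :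
    (xMul k b ^ m) y = Ideal.Quotient.mk _ (X ^ m) * y := by
  rw [xMul, LinearMap.pow_mulLeft, map_pow, LinearMap.mulLeft_apply]

open Polynomial in
lemma isJordanBlock_xMul (k : Type) [Field k] (b : ℕ) :
    Module.End.IsJordanBlock (xMul k (b + 1)) (b + 1) 1 := by
  refine ⟨?_, ?_, ?_⟩
  · refine LinearMap.ext fun y => ?_
    rw [xMul_pow_apply, Ideal.Quotient.eq_zero_iff_mem.mpr (Ideal.mem_span_singleton_self _),
      zero_mul, LinearMap.zero_apply]
  · rw [xMul_pow_apply, mul_one, Ne, Ideal.Quotient.eq_zero_iff_mem, Ideal.mem_span_singleton,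
      pow_dvd_pow_iff X_ne_zero not_isUnit_X]
    omega
  · have hpow : (fun i : ℕ => (xMul k (b + 1) ^ i) 1) =
        (Ideal.Quotient.mkₐ k (Ideal.span {(X : k[X]) ^ (b + 1)})).toLinearMap ∘
          basisMonomials k := by
      funext i
      simp [xMul_pow_apply, coe_basisMonomials, monomial_one_right_eq_X_pow]
    rw [hpow, Set.range_comp, ← Submodule.map_span, (basisMonomials k).span_eq,
      Submodule.map_top, LinearMap.range_eq_top.mpr (Ideal.Quotient.mkₐ_surjective k _)]

def singleBlockEquiv (k : Type) [Field k] {n : ℕ} (t₀ : Fin n) :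
    MJ k n (fun t => if t = t₀ then 1 else 0) ≃ₗ[k] Mt k (t₀ + 1) :=
  LinearEquiv.ofBijective
    ((LinearMap.proj (R := k) (φ := fun _ => Mt k (t₀ + 1))
        (⟨0, by simp⟩ : Fin (if t₀ = t₀ then 1 else 0))).comp (LinearMap.proj t₀)) <| by
    refine ⟨fun z z' hzz' => ?_, fun y => ⟨Pi.single
      (M := fun t => Fin (if t = t₀ then 1 else 0) → Mt k (t + 1)) t₀ fun _ => y, by simp⟩⟩
    funext t i
    by_cases ht : t = t₀
    · subst ht
      obtain rfl : i = ⟨0, by simp⟩ := Fin.ext (by have := i.isLt; simp at this; simp [this])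
      exact hzz'
    · exact absurd i.isLt (by simp [ht])

lemma singleBlockEquiv_MJmap (k : Type) [Field k] {n : ℕ} (t₀ : Fin n)
    (z : MJ k n (fun t => if t = t₀ then 1 else 0)) :
    singleBlockEquiv k t₀ (MJmap k n _ z) = xMul k _ (singleBlockEquiv k t₀ z) :=
  rfl

lemma HasJordanType.exists_isJordanBlock {k V : Type} [Field k] [AddCommGroup V] [Module k V]
    {n a : ℕ} {f : Module.End k V} (ha : 1 ≤ a) (han : a ≤ n)
    (hf : HasJordanType n f (fun t => if (t : ℕ) + 1 = a then 1 else 0)) :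
    ∃ v, f.IsJordanBlock a v := by
  set t₀ : Fin n := ⟨a - 1, by omega⟩
  have hd : (fun t : Fin n => if (t : ℕ) + 1 = a then 1 else 0) =
      fun t => if t = t₀ then 1 else 0 := by
    funext t
    simp only [t₀, Fin.ext_iff]
    congr 1
    exact propext (by omega)
  rw [hd] at hf
  obtain ⟨e, he⟩ := hf
  obtain ⟨v, hv⟩ : ∃ v, f.IsJordanBlock (a - 1 + 1) v :=
    ⟨_, (isJordanBlock_xMul k (a - 1)).of_conj (e.trans (singleBlockEquiv k t₀))
      fun x => by rw [LinearEquiv.trans_apply, he, singleBlockEquiv_MJmap]; rfl⟩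
  rw [Nat.sub_add_cancel ha] at hv
  exact ⟨v, hv⟩

lemma nprime_pos (k : Type) [Field k] {n : ℕ} (hn : 0 < n) : 0 < nprime k n := by
  unfold nprime
  split_ifs
  · exact hn
  · exact Nat.div_pos (Nat.gcd_le_left _ hn) (Nat.gcd_pos_of_pos_left _ hn)

namespace QCI

variable {k : Type} [Field k] {n c : ℕ} {q : k}

lemma X_mul_X {i j : Fin c} (h : i < j) :
    X k n c q i * X k n c q j = q • (X k n c q j * X k n c q i) := by
  unfold X
  rw [← map_mul, ← map_mul, ← map_smul]
  exact RingQuot.mkAlgHom_rel k (QCIRel.comm i j h)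

lemma u_add (lam mu : Fin c → k) : u k n c q (lam + mu) = u k n c q lam + u k n c q mu := by
  simp only [u, Pi.add_apply, add_smul, Finset.sum_add_distrib]

lemma u_single (i : Fin c) (s : k) : u k n c q (Pi.single i s) = s • X k n c q i := by
  simp [u, Pi.single_apply, ite_smul]

end QCI

theorem stmt14_general (k : Type) [Field k] (n c : ℕ) (hc : 2 ≤ c) (q : k)
    (hq : IsPrimitiveRoot q (nprime k n)) (a : ℕ) (ha2 : 2 ≤ a) (han : a ≤ n)
    (V : Type) [AddCommGroup V] [Module k V]
    (rho : QCI k n c q →ₐ[k] Module.End k V) :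
    ¬ ∀ lam : Fin c → k, lam ≠ 0 →
        HasJordanType n (rho (QCI.u k n c q lam))
          (fun t => if (t : ℕ) + 1 = a then 1 else 0) := by
  intro H
  have hJ (lam : Fin c → k) (hlam : lam ≠ 0) :
      ∃ v, (rho (QCI.u k n c q lam)).IsJordanBlock a v :=
    (H lam hlam).exists_isJordanBlock (by omega) han
  have hq0 : q ≠ 0 := hq.ne_zero (nprime_pos k (by omega)).ne'
  set i₀ : Fin c := ⟨0, by omega⟩
  set i₁ : Fin c := ⟨1, by omega⟩
  set f := rho (QCI.X k n c q i₀)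
  set g := rho (QCI.X k n c q i₁)
  have hgf (x : V) : g (f x) = q⁻¹ • f (g x) := by
    have hfg : f * g = q • (g * f) := by
      rw [← map_mul, ← map_mul, ← map_smul, QCI.X_mul_X (by simp [i₀, i₁, Fin.lt_def])]
    rw [← Module.End.mul_apply f, hfg, LinearMap.smul_apply, Module.End.mul_apply,
      inv_smul_smul₀ hq0]
  obtain ⟨v, hf⟩ := hJ (Pi.single i₀ 1) (by simp)
  obtain ⟨w, hg⟩ := hJ (Pi.single i₁ 1) (by simp)
  rw [QCI.u_single, one_smul] at hf hg
  obtain ⟨t, ht⟩ := hf.exists_add_smul_pow_pred_eq_zero hg hgf ha2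
  obtain ⟨x, hu⟩ := hJ (Pi.single i₀ 1 + Pi.single i₁ t) fun h => by
    simpa [i₀, i₁] using congrFun h i₀
  rw [QCI.u_add, QCI.u_single, QCI.u_single, one_smul, map_add, map_smul] at hu
  exact hu.pow_pred_apply_ne_zero (by rw [ht, LinearMap.zero_apply])

theorem stmt14 (k : Type) [Field k] (n c : ℕ) (hn : 2 ≤ n) (hc : 2 ≤ c) (q : k)
    (hq : IsPrimitiveRoot q (nprime k n)) (a : ℕ) (ha2 : 2 ≤ a) (han : a ≤ n)
    (V : Type) [AddCommGroup V] [Module k V]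
    (rho : QCI k n c q →ₐ[k] Module.End k V) :
    ¬ ∀ lam : Fin c → k, lam ≠ 0 →
        HasJordanType n (rho (QCI.u k n c q lam))
          (fun t => if (t : ℕ) + 1 = a then 1 else 0) :=
  stmt14_general k n c hc q hq a ha2 han V rho

end
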